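/- arXiv:math/0210322 — 3 statements merged into one kernel-verified Lean document; each statement's English description precedes it below -/
import Mathlib

section
/- Let Υ be a path connection on G satisfying the reparametrization law. Then for all paths λ, λ̄ in X with λ(1) = λ̄(0), writing λ∘λ̄ for the concatenation ((λ∘λ̄)(t) = λ(2t) for t ≤ 1/2, λ̄(2t−1) for t ≥ 1/2), one has Υ^{λ∘λ̄}(1) = Υ^{λ̄}(1) · Υ^λ(1). Moreover, for every path λ, writing λ⁻¹ for the reversed path λ⁻¹(t) = λ(1−t), one has Υ^{λ⁻¹}(1) = (Υ^λ(1))⁻¹ in the groupoid G. -/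
/-!
STATEMENT 2: `Υ^{λ∘λ̄}(1) = Υ^{λ̄}(1) · Υ^λ(1)` and `Υ^{λ⁻¹}(1) = (Υ^λ(1))⁻¹`.


-/

open CategoryTheory

noncomputable section

structure IntervalDiffeo (t₀ t₁ : unitInterval) : Type where
  toFun : ℝ → ℝ
  smooth : ContDiff ℝ (⊤ : ℕ∞) toFun
  bijOn : Set.BijOn toFun (Set.Icc (0 : ℝ) 1) (Set.Icc (t₀ : ℝ) (t₁ : ℝ))
  deriv_ne : ∀ t ∈ Set.Icc (0 : ℝ) 1, deriv toFun t ≠ 0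

def IntervalDiffeo.restrict {t₀ t₁ : unitInterval} (ψ : IntervalDiffeo t₀ t₁)
    (t : unitInterval) : unitInterval :=
  ⟨ψ.toFun t, le_trans t₀.2.1 (ψ.bijOn.mapsTo t.2).1, le_trans (ψ.bijOn.mapsTo t.2).2 t₁.2.2⟩

def IntervalDiffeo.reparam {X : Type*} [TopologicalSpace X] {t₀ t₁ : unitInterval}
    (ψ : IntervalDiffeo t₀ t₁) (lam : C(unitInterval, X)) : C(unitInterval, X) :=
  ⟨fun t => lam (ψ.restrict t),
    lam.continuous.comp ((ψ.smooth.continuous.comp continuous_subtype_val).subtype_mk _)⟩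

def PathConnection (X : Type*) [TopologicalSpace X] [Groupoid X] :=
  ∀ (lam : C(unitInterval, X)) (t : unitInterval), lam 0 ⟶ lam t

def ReparamLaw {X : Type*} [TopologicalSpace X] [Groupoid X] (Υ : PathConnection X) : Prop :=
  ∀ (lam : C(unitInterval, X)) (t₀ t₁ : unitInterval), t₀ < t₁ →
    ∀ (ψ : IntervalDiffeo t₀ t₁) (t : unitInterval),
      Υ lam (ψ.restrict t) = Υ lam (ψ.restrict 0) ≫ Υ (ψ.reparam lam) t

/-- A continuous map `[0,1] → X` viewed as a `Path` from `λ(0)` to `λ(1)`. -/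
def pathOf {X : Type*} [TopologicalSpace X] (lam : C(unitInterval, X)) : Path (lam 0) (lam 1) :=
  ⟨lam, rfl, rfl⟩

/-- The concatenation `λ ∘ λ̄` of two paths with `λ(1) = λ̄(0)`:
`(λ ∘ λ̄)(t) = λ(2t)` for `t ≤ 1/2` and `(λ ∘ λ̄)(t) = λ̄(2t−1)` for `t ≥ 1/2`. -/
def concatCM {X : Type*} [TopologicalSpace X] (lam mu : C(unitInterval, X))
    (h : lam 1 = mu 0) : C(unitInterval, X) :=
  ((pathOf lam).trans ((pathOf mu).cast h rfl)).toContinuousMap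

/-- `2t`, for `t ≤ 1/2`, as an element of `[0,1]`. -/
def lhalf (t : unitInterval) (ht : (t : ℝ) ≤ 1 / 2) : unitInterval :=
  ⟨2 * (t : ℝ), mul_nonneg (by norm_num) t.2.1, by linarith⟩

/-- `2t - 1`, for `t ≥ 1/2`, as an element of `[0,1]`. -/
def rhalf (t : unitInterval) (ht : 1 / 2 ≤ (t : ℝ)) : unitInterval :=
  ⟨2 * (t : ℝ) - 1, by linarith, by linarith [t.2.2]⟩

theorem concatCM_zero {X : Type*} [TopologicalSpace X] (lam mu : C(unitInterval, X))
    (h : lam 1 = mu 0) : concatCM lam mu h 0 = lam 0 :=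
  ((pathOf lam).trans ((pathOf mu).cast h rfl)).source

theorem concatCM_left {X : Type*} [TopologicalSpace X] (lam mu : C(unitInterval, X))
    (h : lam 1 = mu 0) (t : unitInterval) (ht : (t : ℝ) ≤ 1 / 2) :
    concatCM lam mu h t = lam (lhalf t ht) := by
  show ((pathOf lam).trans ((pathOf mu).cast h rfl)) t = _
  rw [Path.trans_apply, dif_pos ht]
  rfl

theorem concatCM_right {X : Type*} [TopologicalSpace X] (lam mu : C(unitInterval, X))
    (h : lam 1 = mu 0) (t : unitInterval) (ht : 1 / 2 ≤ (t : ℝ)) :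
    concatCM lam mu h t = mu (rhalf t ht) := by
  show ((pathOf lam).trans ((pathOf mu).cast h rfl)) t = _
  rw [Path.trans_apply]
  by_cases h' : (t : ℝ) ≤ 1 / 2
  · rw [dif_pos h']
    have h12 : (t : ℝ) = 1 / 2 := le_antisymm h' ht
    have e1 : lam 1 = mu (rhalf t ht) := by
      rw [h]
      congr 1
      exact Subtype.ext (by simp [rhalf, h12])
    refine Eq.trans ?_ e1
    show lam _ = lam 1
    congr 1
    exact Subtype.ext (by simp [h12])
  · rw [dif_neg h']
    rfl

/-- **Statement 1** (transport law). -/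

theorem concatCM_one {X : Type*} [TopologicalSpace X] (lam mu : C(unitInterval, X))
    (h : lam 1 = mu 0) : concatCM lam mu h 1 = mu 1 :=
  ((pathOf lam).trans ((pathOf mu).cast h rfl)).target

/-- The reversed path `λ⁻¹(t) = λ(1 - t)`. -/
def revCM {X : Type*} [TopologicalSpace X] (lam : C(unitInterval, X)) : C(unitInterval, X) :=
  ⟨fun t => lam (unitInterval.symm t), lam.continuous.comp unitInterval.continuous_symm⟩

theorem revCM_zero {X : Type*} [TopologicalSpace X] (lam : C(unitInterval, X)) :
    revCM lam 0 = lam 1 := by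
  show lam (unitInterval.symm 0) = lam 1
  rw [unitInterval.symm_zero]

theorem revCM_one {X : Type*} [TopologicalSpace X] (lam : C(unitInterval, X)) :
    revCM lam 1 = lam 0 := by
  show lam (unitInterval.symm 1) = lam 0
  rw [unitInterval.symm_one]

/-! Everything follows from the reparametrization law applied to affine diffeomorphisms.
For `ψ = id` at `t = 0` it reads `Υ^λ(0) = Υ^λ(0) · Υ^λ(0)`, so `Υ^λ(0)` is an identity.
The halves `t ↦ t/2` and `t ↦ (t+1)/2` reparametrize `λ∘λ̄` to `λ` and `λ̄`, which splits
`Υ^{λ∘λ̄}(1)` at the midpoint, and `t ↦ 1 - t` reparametrizes `λ` to `λ⁻¹`, giving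
`Υ^λ(0) = Υ^{λ⁻¹}(1) · Υ^λ(1)`. -/

def unitInterval.half : unitInterval := ⟨1 / 2, by norm_num, by norm_num⟩

@[simp]
lemma unitInterval.coe_half : (unitInterval.half : ℝ) = 1 / 2 :=
  rfl

lemma unitInterval.zero_lt_half : 0 < unitInterval.half := by
  rw [← Subtype.coe_lt_coe]; norm_num

lemma unitInterval.half_lt_one : unitInterval.half < 1 := by
  rw [← Subtype.coe_lt_coe]; norm_num

namespace IntervalDiffeo

open unitInterval

variable {t₀ t₁ : unitInterval} {X : Type*} [TopologicalSpace X]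

def affine (h : t₀ < t₁) : IntervalDiffeo t₀ t₁ where
  toFun t := ((t₁ : ℝ) - t₀) * t + t₀
  smooth := by fun_prop
  bijOn := by
    have hpos : (0 : ℝ) < (t₁ : ℝ) - t₀ := sub_pos.2 h
    convert ((strictMono_mul_left_of_pos hpos).add_const (t₀ : ℝ)).injective.injOn.bijOn_image
      using 1
    rw [Set.image_affine_Icc' hpos]
    ring_nf
  deriv_ne t _ := by
    rw [(((hasDerivAt_id' t).const_mul _).add_const _).deriv]
    simpa [sub_eq_zero] using Subtype.coe_injective.ne h.ne'

def symm : IntervalDiffeo 0 1 where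
  toFun t := 1 - t
  smooth := by fun_prop
  bijOn := by
    have hmaps : Set.MapsTo (fun t : ℝ => 1 - t) (Set.Icc 0 1) (Set.Icc 0 1) := fun t ht =>
      ⟨sub_nonneg.2 ht.2, sub_le_self 1 ht.1⟩
    simpa using Set.InvOn.bijOn ⟨fun t _ => sub_sub_cancel 1 t, fun t _ => sub_sub_cancel 1 t⟩
      hmaps hmaps
  deriv_ne t _ := by
    rw [((hasDerivAt_id' t).const_sub 1).deriv]
    norm_num

@[simp]
lemma coe_affine_restrict (h : t₀ < t₁) (t : unitInterval) :
    ((affine h).restrict t : ℝ) = ((t₁ : ℝ) - t₀) * t + t₀ :=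
  rfl

@[simp]
lemma coe_symm_restrict (t : unitInterval) : (symm.restrict t : ℝ) = 1 - t :=
  rfl

lemma affine_restrict_zero (h : t₀ < t₁) : (affine h).restrict 0 = t₀ :=
  Subtype.ext (by simp)

lemma affine_restrict_one (h : t₀ < t₁) : (affine h).restrict 1 = t₁ :=
  Subtype.ext (by simp)

lemma symm_restrict_zero : symm.restrict 0 = 1 :=
  Subtype.ext (by simp)

lemma symm_restrict_one : symm.restrict 1 = 0 :=
  Subtype.ext (by simp)

lemma affine_zero_one_reparam (lam : C(unitInterval, X)) :
    (affine zero_lt_one).reparam lam = lam :=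
  ContinuousMap.ext fun t => congrArg lam (Subtype.ext (by simp))

lemma symm_reparam (lam : C(unitInterval, X)) : symm.reparam lam = revCM lam :=
  ContinuousMap.ext fun t => congrArg lam (Subtype.ext (by simp))

lemma affine_reparam_concatCM_left (lam mu : C(unitInterval, X)) (h : lam 1 = mu 0) :
    (affine zero_lt_half).reparam (concatCM lam mu h) = lam := by
  ext t
  have ht : ((affine zero_lt_half).restrict t : ℝ) ≤ 1 / 2 := by
    simp only [coe_affine_restrict, coe_half, Set.Icc.coe_zero]
    linarith [t.2.2]
  refine (concatCM_left lam mu h _ ht).trans (congrArg lam (Subtype.ext ?_))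
  simp [lhalf]

lemma affine_reparam_concatCM_right (lam mu : C(unitInterval, X)) (h : lam 1 = mu 0) :
    (affine half_lt_one).reparam (concatCM lam mu h) = mu := by
  ext t
  have ht : 1 / 2 ≤ ((affine half_lt_one).restrict t : ℝ) := by
    simp only [coe_affine_restrict, coe_half, Set.Icc.coe_one]
    linarith [t.2.1]
  refine (concatCM_right lam mu h _ ht).trans (congrArg mu (Subtype.ext ?_))
  simp only [rhalf, coe_affine_restrict, coe_half, Set.Icc.coe_one]
  ring

end IntervalDiffeo

namespace ReparamLaw

variable {X : Type*} [TopologicalSpace X] [Groupoid X] {Υ : PathConnection X}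

lemma eq_comp_of_reparam_eq (hΥ : ReparamLaw Υ) {lam mu : C(unitInterval, X)}
    {t₀ t₁ : unitInterval} (h : t₀ < t₁) (ψ : IntervalDiffeo t₀ t₁) (hmu : ψ.reparam lam = mu)
    {s s' : unitInterval} (t : unitInterval) (hs : ψ.restrict 0 = s) (hs' : ψ.restrict t = s') :
    Υ lam s' = Υ lam s ≫ eqToHom (by rw [← hmu, ← hs]; rfl) ≫ Υ mu t ≫
      eqToHom (by rw [← hmu, ← hs']; rfl) := by
  subst hmu hs hs'
  erw [eqToHom_refl, eqToHom_refl, Category.id_comp, Category.comp_id]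
  exact hΥ lam t₀ t₁ h ψ t

lemma apply_zero (hΥ : ReparamLaw Υ) (lam : C(unitInterval, X)) : Υ lam 0 = 𝟙 (lam 0) := by
  have h := hΥ.eq_comp_of_reparam_eq zero_lt_one _ (IntervalDiffeo.affine_zero_one_reparam lam) 0
    (IntervalDiffeo.affine_restrict_zero _) (IntervalDiffeo.affine_restrict_zero _)
  simp only [eqToHom_refl, Category.id_comp, Category.comp_id] at h
  exact (cancel_epi (Υ lam 0)).1 (by rw [Category.comp_id, ← h])

end ReparamLaw

/-- `Υ^{λ∘λ̄}(1) = Υ^{λ̄}(1) · Υ^λ(1)`, and for every path `λ`,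
`Υ^{λ⁻¹}(1) = (Υ^λ(1))⁻¹` in the groupoid. -/
theorem transport_one_and_inv {X : Type*} [TopologicalSpace X] [Groupoid X]
    (Υ : PathConnection X) (hΥ : ReparamLaw Υ) :
    (∀ (lam mu : C(unitInterval, X)) (h : lam 1 = mu 0),
      Υ (concatCM lam mu h) 1 =
        eqToHom (concatCM_zero lam mu h) ≫ Υ lam 1 ≫ eqToHom h ≫
          Υ mu 1 ≫ eqToHom (concatCM_one lam mu h).symm) ∧
    (∀ lam : C(unitInterval, X),
      Υ (revCM lam) 1 =
        eqToHom (revCM_zero lam) ≫ Groupoid.inv (Υ lam 1) ≫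
          eqToHom (revCM_one lam).symm) := by
  open IntervalDiffeo unitInterval in
  constructor
  · intro lam mu h
    rw [hΥ.eq_comp_of_reparam_eq half_lt_one _ (affine_reparam_concatCM_right lam mu h) 1
        (affine_restrict_zero _) (affine_restrict_one _),
      hΥ.eq_comp_of_reparam_eq zero_lt_half _ (affine_reparam_concatCM_left lam mu h) 1
        (affine_restrict_zero _) (affine_restrict_one _),
      hΥ.apply_zero]
    simp
  · intro lam
    have hsymm := hΥ.eq_comp_of_reparam_eq zero_lt_one symm (symm_reparam lam) 1
      symm_restrict_zero symm_restrict_one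
    rw [hΥ.apply_zero] at hsymm
    rw [Groupoid.inv_eq_inv, IsIso.inv_eq_of_hom_inv_id hsymm.symm]
    simp

end
end

section
/- Rank-n homotopy is an equivalence relation on the set of smooth n-loops in X based at *: it is reflexive, symmetric, and transitive. -/
/-!
A thin homotopy is first replaced by one that is smooth on all of `ℝ × ℝⁿ`: time is
reparametrised by a smooth step, so that the homotopy is stationary near `s = 0` and `s = 1`,
and the map is extended by `x₀` off the cube, which keeps it smooth because it is already `x₀`
near the boundary of the cube. Such homotopies are reversed by `s ↦ 1 - s` and concatenated
after affine reparametrisations of time; two of them with a common end agree near the seam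
(on the cube they both equal the middle loop, off it they are both `x₀`), so the concatenation
is smooth. Near every point each of these maps is constant or a smooth reparametrisation of a
given one, so the rank of the differential stays at most `n`.
-/

open scoped Manifold

noncomputable section

/-- A smooth `n`-loop in a manifold `X` based at `x₀`: a map `[0,1]ⁿ → X` which is smooth
in the sense that it extends to a `C^∞` map on an open neighbourhood of the cube, and which
equals `x₀` whenever some coordinate lies in `[0,ε) ∪ (1-ε,1]`. -/
structure SmoothNLoop {E HM : Type*} [NormedAddCommGroup E] [NormedSpace ℝ E]
    [TopologicalSpace HM] (IM : ModelWithCorners ℝ E HM)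
    (X : Type*) [TopologicalSpace X] [ChartedSpace HM X] (n : ℕ) (x₀ : X) : Type _ where
  toFun : (Fin n → ℝ) → X
  smooth : ∃ U : Set (Fin n → ℝ), IsOpen U ∧ Set.Icc 0 1 ⊆ U ∧
      ContMDiffOn 𝓘(ℝ, Fin n → ℝ) IM (⊤ : ℕ∞) toFun U
  based : ∃ ε : ℝ, 0 < ε ∧ ∀ t ∈ Set.Icc (0 : Fin n → ℝ) 1,
      (∃ i, t i < ε ∨ 1 - ε < t i) → toFun t = x₀

/-- Rank-`n` (thin) homotopy of smooth `n`-loops: a homotopy `K : [0,1] × [0,1]ⁿ → X`,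
smooth on an open neighbourhood of its domain, which is based (condition 1), starts at `ℓ₁`
(condition 2), ends at `ℓ₂` (condition 3), and whose total differential has rank `≤ n`
throughout its domain (condition 4). -/
def ThinHomotopic {E HM : Type*} [NormedAddCommGroup E] [NormedSpace ℝ E]
    [TopologicalSpace HM] {IM : ModelWithCorners ℝ E HM}
    {X : Type*} [TopologicalSpace X] [ChartedSpace HM X] {n : ℕ} {x₀ : X}
    (ℓ₁ ℓ₂ : SmoothNLoop IM X n x₀) : Prop :=
  ∃ (K : ℝ × (Fin n → ℝ) → X) (ε : ℝ), 0 < ε ∧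
    (∃ U : Set (ℝ × (Fin n → ℝ)), IsOpen U ∧
        Set.Icc (0 : ℝ) 1 ×ˢ Set.Icc (0 : Fin n → ℝ) 1 ⊆ U ∧
        ContMDiffOn 𝓘(ℝ, ℝ × (Fin n → ℝ)) IM (⊤ : ℕ∞) K U) ∧
    (∀ s ∈ Set.Icc (0 : ℝ) 1, ∀ t ∈ Set.Icc (0 : Fin n → ℝ) 1,
        (∃ i, t i < ε ∨ 1 - ε < t i) → K (s, t) = x₀) ∧
    (∀ s ∈ Set.Icc (0 : ℝ) 1, ∀ t ∈ Set.Icc (0 : Fin n → ℝ) 1,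
        s < ε → K (s, t) = ℓ₁.toFun t) ∧
    (∀ s ∈ Set.Icc (0 : ℝ) 1, ∀ t ∈ Set.Icc (0 : Fin n → ℝ) 1,
        1 - ε < s → K (s, t) = ℓ₂.toFun t) ∧
    (∀ p ∈ Set.Icc (0 : ℝ) 1 ×ˢ Set.Icc (0 : Fin n → ℝ) 1,
        LinearMap.rank (mfderiv 𝓘(ℝ, ℝ × (Fin n → ℝ)) IM K p).toLinearMap ≤ (n : Cardinal))

open Set Topology

section ThinAt

variable {F G : Type*} [NormedAddCommGroup F] [NormedSpace ℝ F] [TopologicalSpace G]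
  {I : ModelWithCorners ℝ F G} {M : Type*} [TopologicalSpace M] [ChartedSpace G M]
  {E HM : Type*} [NormedAddCommGroup E] [NormedSpace ℝ E] [TopologicalSpace HM]
  {IM : ModelWithCorners ℝ E HM} {X : Type*} [TopologicalSpace X] [ChartedSpace HM X]
  {F' G' : Type*} [NormedAddCommGroup F'] [NormedSpace ℝ F'] [TopologicalSpace G']
  {I' : ModelWithCorners ℝ F' G'} {M' : Type*} [TopologicalSpace M'] [ChartedSpace G' M']

variable (I IM) in
def ThinAt (n : ℕ) (f : M → X) (p : M) : Prop :=
  ContMDiffAt I IM (⊤ : ℕ∞) f p ∧ (mfderiv I IM f p).toLinearMap.rank ≤ n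

variable {n : ℕ} {f g : M → X} {p : M}

theorem ThinAt.congr_of_eventuallyEq (hf : ThinAt I IM n f p) (hg : g =ᶠ[𝓝 p] f) :
    ThinAt I IM n g p :=
  ⟨hf.1.congr_of_eventuallyEq hg, by rw [hg.mfderiv_eq]; exact hf.2⟩

theorem thinAt_const (x : X) : ThinAt I IM n (fun _ => x) p :=
  ⟨contMDiffAt_const, by simp⟩

theorem ThinAt.comp {φ : M' → M} {q : M'} (hf : ThinAt I IM n f (φ q))
    (hφ : ContMDiffAt I' I (⊤ : ℕ∞) φ q) : ThinAt I' IM n (f ∘ φ) q := by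
  refine ⟨hf.1.comp q hφ, ?_⟩
  rw [mfderiv_comp q (hf.1.mdifferentiableAt (by simp)) (hφ.mdifferentiableAt (by simp)),
    ContinuousLinearMap.toLinearMap_comp]
  exact (LinearMap.rank_comp_le_left _ _).trans hf.2

theorem ContMDiffAt.thinAt_fin {f : (Fin n → ℝ) → X} {t : Fin n → ℝ}
    (hf : ContMDiffAt 𝓘(ℝ, Fin n → ℝ) IM (⊤ : ℕ∞) f t) :
    ThinAt 𝓘(ℝ, Fin n → ℝ) IM n f t := by
  refine ⟨hf, ?_⟩
  have h := lift_rank_range_le (mfderiv 𝓘(ℝ, Fin n → ℝ) IM f t).toLinearMap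
  rwa [show Module.rank ℝ (TangentSpace 𝓘(ℝ, Fin n → ℝ) t) = n from rank_fin_fun n,
    Cardinal.lift_natCast, Cardinal.lift_le_nat_iff] at h

end ThinAt

section Cube

def cubeCollar (n : ℕ) (ε : ℝ) : Set (Fin n → ℝ) := {t | ∃ i, t i < ε ∨ 1 - ε < t i}

variable {n : ℕ} {ε : ℝ}

theorem isOpen_cubeCollar (n : ℕ) (ε : ℝ) : IsOpen (cubeCollar n ε) := by
  simp only [cubeCollar, ofPred_exists, ofPred_or]
  exact isOpen_iUnion fun i => (isOpen_lt (continuous_apply i) continuous_const).union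
    (isOpen_lt continuous_const (continuous_apply i))

theorem cubeCollar_mono (n : ℕ) : Monotone (cubeCollar n) := by
  rintro ε ε' h t ⟨i, hi⟩
  exact ⟨i, hi.imp (fun h' => h'.trans_le h) (fun h' => by linarith)⟩

theorem compl_Icc_subset_cubeCollar (hε : 0 < ε) :
    (Icc (0 : Fin n → ℝ) 1)ᶜ ⊆ cubeCollar n ε := by
  intro t ht
  simp only [mem_compl_iff, mem_Icc, Pi.le_def, not_and_or, not_forall, not_le] at ht
  rcases ht with ⟨i, hi⟩ | ⟨i, hi⟩
  · exact ⟨i, Or.inl (by simp only [Pi.zero_apply] at hi; linarith)⟩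
  · exact ⟨i, Or.inr (by simp only [Pi.one_apply] at hi; linarith)⟩

theorem compl_cubeCollar_subset_interior_Icc (hε : 0 < ε) :
    (cubeCollar n ε)ᶜ ⊆ interior (Icc (0 : Fin n → ℝ) 1) := by
  rw [← pi_univ_Icc, interior_pi_set finite_univ]
  intro t ht i _
  simp only [cubeCollar, mem_compl_iff, mem_ofPred_eq, not_exists, not_or, not_lt] at ht
  simp only [Pi.zero_apply, Pi.one_apply, interior_Icc]
  exact ⟨by linarith [ht i], by linarith [ht i]⟩

end Cube

section

variable {E HM : Type*} [NormedAddCommGroup E] [NormedSpace ℝ E] [TopologicalSpace HM]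
  {IM : ModelWithCorners ℝ E HM} {X : Type*} [TopologicalSpace X] [ChartedSpace HM X]
  {n : ℕ} {x₀ : X} {ℓ₁ ℓ₂ ℓ₃ : SmoothNLoop IM X n x₀}

structure GlobalThinHomotopy (ℓ₁ ℓ₂ : SmoothNLoop IM X n x₀) where
  toFun : ℝ × (Fin n → ℝ) → X
  thinAt : ∀ p, ThinAt 𝓘(ℝ, ℝ × (Fin n → ℝ)) IM n toFun p
  δ : ℝ
  δ_pos : 0 < δ
  based : ∀ s, ∀ t ∈ cubeCollar n δ, toFun (s, t) = x₀
  start : ∀ s ≤ (1 / 4 : ℝ), ∀ t ∈ Icc (0 : Fin n → ℝ) 1, toFun (s, t) = ℓ₁.toFun t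
  finish : ∀ s ≥ (3 / 4 : ℝ), ∀ t ∈ Icc (0 : Fin n → ℝ) 1, toFun (s, t) = ℓ₂.toFun t

namespace GlobalThinHomotopy

theorem thinHomotopic (H : GlobalThinHomotopy ℓ₁ ℓ₂) : ThinHomotopic ℓ₁ ℓ₂ := by
  have hε : min H.δ (1 / 4) ≤ 1 / 4 := min_le_right _ _
  exact ⟨H.toFun, min H.δ (1 / 4), lt_min H.δ_pos (by norm_num),
    ⟨univ, isOpen_univ, subset_univ _, fun p _ => (H.thinAt p).1.contMDiffWithinAt⟩,
    fun s _ t _ ht => H.based s t (cubeCollar_mono n (min_le_left _ _) ht),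
    fun s _ t ht hs => H.start s (by linarith) t ht,
    fun s _ t ht hs => H.finish s (by linarith) t ht,
    fun p _ => (H.thinAt p).2⟩

def symm (H : GlobalThinHomotopy ℓ₁ ℓ₂) : GlobalThinHomotopy ℓ₂ ℓ₁ where
  toFun p := H.toFun (1 - p.1, p.2)
  thinAt p := (H.thinAt _).comp (φ := fun q : ℝ × (Fin n → ℝ) => (1 - q.1, q.2))
    ((contDiff_const.sub contDiff_fst).prodMk contDiff_snd).contMDiff.contMDiffAt
  δ := H.δ
  δ_pos := H.δ_pos
  based s := H.based (1 - s)
  start s hs := H.finish (1 - s) (by linarith)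
  finish s hs := H.start (1 - s) (by linarith)

theorem finish_eq_start (H₁ : GlobalThinHomotopy ℓ₁ ℓ₂) (H₂ : GlobalThinHomotopy ℓ₂ ℓ₃)
    {s s' : ℝ} (hs : 3 / 4 ≤ s) (hs' : s' ≤ 1 / 4) (t : Fin n → ℝ) :
    H₁.toFun (s, t) = H₂.toFun (s', t) := by
  by_cases ht : t ∈ Icc (0 : Fin n → ℝ) 1
  · rw [H₁.finish s hs t ht, H₂.start s' hs' t ht]
  · rw [H₁.based s t (compl_Icc_subset_cubeCollar H₁.δ_pos ht),
      H₂.based s' t (compl_Icc_subset_cubeCollar H₂.δ_pos ht)]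

/-- The affine changes of time map `[1/4, 1/2]` onto `[1/4, 1]` and `[1/2, 3/4]` onto `[0, 3/4]`,
so the stationary time collars are preserved and the seam `s = 1/2` has a neighbourhood
`(5/12, 7/12)` on which both halves are stationary at the common end. -/
def concat (H₁ : GlobalThinHomotopy ℓ₁ ℓ₂) (H₂ : GlobalThinHomotopy ℓ₂ ℓ₃)
    (p : ℝ × (Fin n → ℝ)) : X :=
  if p.1 ≤ 1 / 2 then H₁.toFun (3 * p.1 - 1 / 2, p.2) else H₂.toFun (3 * p.1 - 3 / 2, p.2)

variable (H₁ : GlobalThinHomotopy ℓ₁ ℓ₂) (H₂ : GlobalThinHomotopy ℓ₂ ℓ₃)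
  {p : ℝ × (Fin n → ℝ)}

theorem concat_of_lt (hp : p.1 < 7 / 12) : concat H₁ H₂ p = H₁.toFun (3 * p.1 - 1 / 2, p.2) := by
  unfold concat
  split_ifs with h
  · rfl
  · exact finish_eq_start H₁ H₂ (by linarith) (by linarith) _ |>.symm

theorem concat_of_gt (hp : 5 / 12 < p.1) : concat H₁ H₂ p = H₂.toFun (3 * p.1 - 3 / 2, p.2) := by
  unfold concat
  split_ifs with h
  · exact finish_eq_start H₁ H₂ (by linarith) (by linarith) _
  · rfl

theorem thinAt_concat (p : ℝ × (Fin n → ℝ)) :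
    ThinAt 𝓘(ℝ, ℝ × (Fin n → ℝ)) IM n (concat H₁ H₂) p := by
  have affine (c : ℝ) : ContMDiff 𝓘(ℝ, ℝ × (Fin n → ℝ)) 𝓘(ℝ, ℝ × (Fin n → ℝ)) (⊤ : ℕ∞)
      fun q : ℝ × (Fin n → ℝ) => (3 * q.1 - c, q.2) :=
    (((contDiff_const.mul contDiff_fst).sub contDiff_const).prodMk contDiff_snd).contMDiff
  rcases lt_or_ge p.1 (7 / 12) with hp | hp
  · refine ((H₁.thinAt _).comp (affine (1 / 2) p)).congr_of_eventuallyEq ?_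
    filter_upwards [(isOpen_lt continuous_fst continuous_const).mem_nhds hp] with q hq
    exact concat_of_lt H₁ H₂ hq
  · refine ((H₂.thinAt _).comp (affine (3 / 2) p)).congr_of_eventuallyEq ?_
    filter_upwards [(isOpen_lt continuous_const continuous_fst).mem_nhds
      (show (5 / 12 : ℝ) < p.1 by linarith)] with q hq
    exact concat_of_gt H₁ H₂ hq

def trans : GlobalThinHomotopy ℓ₁ ℓ₃ where
  toFun := concat H₁ H₂
  thinAt := thinAt_concat H₁ H₂
  δ := min H₁.δ H₂.δ
  δ_pos := lt_min H₁.δ_pos H₂.δ_pos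
  based s t ht := by
    rcases lt_or_ge s (7 / 12) with hs | hs
    · rw [concat_of_lt H₁ H₂ hs, H₁.based _ t (cubeCollar_mono n (min_le_left _ _) ht)]
    · rw [concat_of_gt H₁ H₂ (by linarith), H₂.based _ t (cubeCollar_mono n (min_le_right _ _) ht)]
  start s hs t ht := by
    rw [concat_of_lt H₁ H₂ (by linarith), H₁.start _ (by linarith) t ht]
  finish s hs t ht := by
    rw [concat_of_gt H₁ H₂ (by linarith), H₂.finish _ (by linarith) t ht]

end GlobalThinHomotopy

end

section ExtendOffCube

variable {n : ℕ} {ε : ℝ} {X : Type*} {x₀ : X} {K : ℝ × (Fin n → ℝ) → X} {p : ℝ × (Fin n → ℝ)}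

def smoothStep (s : ℝ) : ℝ := Real.smoothTransition (2 * s - 1 / 2)

theorem smoothStep_mem_Icc (s : ℝ) : smoothStep s ∈ Icc (0 : ℝ) 1 :=
  ⟨Real.smoothTransition.nonneg _, Real.smoothTransition.le_one _⟩

theorem smoothStep_of_le {s : ℝ} (hs : s ≤ 1 / 4) : smoothStep s = 0 :=
  Real.smoothTransition.zero_of_nonpos (by linarith)

theorem smoothStep_of_ge {s : ℝ} (hs : 3 / 4 ≤ s) : smoothStep s = 1 :=
  Real.smoothTransition.one_of_one_le (by linarith)

theorem contDiff_smoothStep : ContDiff ℝ (⊤ : ℕ∞) smoothStep :=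
  Real.smoothTransition.contDiff.comp ((contDiff_const.mul contDiff_id).sub contDiff_const)

open Classical in
def extendOffCube (x₀ : X) (K : ℝ × (Fin n → ℝ) → X) (p : ℝ × (Fin n → ℝ)) : X :=
  if p.2 ∈ Icc (0 : Fin n → ℝ) 1 then K p else x₀

theorem extendOffCube_of_mem (hp : p.2 ∈ Icc (0 : Fin n → ℝ) 1) : extendOffCube x₀ K p = K p :=
  if_pos hp

theorem extendOffCube_of_mem_cubeCollar
    (hK : ∀ p : ℝ × (Fin n → ℝ), p.2 ∈ Icc (0 : Fin n → ℝ) 1 → p.2 ∈ cubeCollar n ε → K p = x₀)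
    (hp : p.2 ∈ cubeCollar n ε) : extendOffCube x₀ K p = x₀ := by
  unfold extendOffCube
  split_ifs with hcube
  · exact hK p hcube hp
  · rfl

variable {E HM : Type*} [NormedAddCommGroup E] [NormedSpace ℝ E] [TopologicalSpace HM]
  {IM : ModelWithCorners ℝ E HM} [TopologicalSpace X] [ChartedSpace HM X]

theorem thinAt_extendOffCube (hε : 0 < ε)
    (hK : ∀ p : ℝ × (Fin n → ℝ), p.2 ∈ Icc (0 : Fin n → ℝ) 1 → p.2 ∈ cubeCollar n ε → K p = x₀)
    (hthin : ∀ p : ℝ × (Fin n → ℝ), p.2 ∈ Icc (0 : Fin n → ℝ) 1 →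
      ThinAt 𝓘(ℝ, ℝ × (Fin n → ℝ)) IM n K p)
    (p : ℝ × (Fin n → ℝ)) : ThinAt 𝓘(ℝ, ℝ × (Fin n → ℝ)) IM n (extendOffCube x₀ K) p := by
  by_cases hp : p.2 ∈ cubeCollar n ε
  · refine (thinAt_const x₀).congr_of_eventuallyEq ?_
    filter_upwards [((isOpen_cubeCollar n ε).preimage continuous_snd).mem_nhds hp] with q hq
    exact extendOffCube_of_mem_cubeCollar hK hq
  · have hint := compl_cubeCollar_subset_interior_Icc hε hp
    refine (hthin p (interior_subset hint)).congr_of_eventuallyEq ?_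
    filter_upwards [(isOpen_interior.preimage continuous_snd).mem_nhds hint] with q hq
    exact extendOffCube_of_mem (interior_subset hq)

end ExtendOffCube

namespace ThinHomotopic

variable {E HM : Type*} [NormedAddCommGroup E] [NormedSpace ℝ E] [TopologicalSpace HM]
  {IM : ModelWithCorners ℝ E HM} {X : Type*} [TopologicalSpace X] [ChartedSpace HM X]
  {n : ℕ} {x₀ : X} {ℓ₁ ℓ₂ ℓ₃ : SmoothNLoop IM X n x₀}

theorem refl (ℓ : SmoothNLoop IM X n x₀) : ThinHomotopic ℓ ℓ := by
  obtain ⟨U, hUo, hU, hℓ⟩ := ℓ.smooth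
  obtain ⟨ε, hε, hbased⟩ := ℓ.based
  have hsnd : ContMDiff 𝓘(ℝ, ℝ × (Fin n → ℝ)) 𝓘(ℝ, Fin n → ℝ) (⊤ : ℕ∞) Prod.snd :=
    contDiff_snd.contMDiff
  refine ⟨fun p => ℓ.toFun p.2, ε, hε, ⟨univ ×ˢ U, isOpen_univ.prod hUo,
      prod_mono (subset_univ _) hU, hℓ.comp hsnd.contMDiffOn fun p hp => hp.2⟩,
    fun _ _ t ht => hbased t ht, fun _ _ _ _ _ => rfl, fun _ _ _ _ _ => rfl, fun p hp => ?_⟩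
  exact ((hℓ.contMDiffAt (hUo.mem_nhds (hU hp.2))).thinAt_fin.comp hsnd.contMDiffAt).2

theorem nonempty_globalThinHomotopy (h : ThinHomotopic ℓ₁ ℓ₂) :
    Nonempty (GlobalThinHomotopy ℓ₁ ℓ₂) := by
  obtain ⟨K, ε, hε, ⟨U, hUo, hU, hK⟩, hbased, hstart, hfinish, hrank⟩ := h
  set K' : ℝ × (Fin n → ℝ) → X := fun p => K (smoothStep p.1, p.2)
  have hK'based (p : ℝ × (Fin n → ℝ)) (ht : p.2 ∈ Icc (0 : Fin n → ℝ) 1)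
      (hc : p.2 ∈ cubeCollar n ε) : K' p = x₀ :=
    hbased _ (smoothStep_mem_Icc _) _ ht hc
  have hK'thin (p : ℝ × (Fin n → ℝ)) (ht : p.2 ∈ Icc (0 : Fin n → ℝ) 1) :
      ThinAt 𝓘(ℝ, ℝ × (Fin n → ℝ)) IM n K' p := by
    have hbox : (smoothStep p.1, p.2) ∈ Icc (0 : ℝ) 1 ×ˢ Icc (0 : Fin n → ℝ) 1 :=
      ⟨smoothStep_mem_Icc _, ht⟩
    refine ThinAt.comp (φ := fun q : ℝ × (Fin n → ℝ) => (smoothStep q.1, q.2))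
      ⟨hK.contMDiffAt (hUo.mem_nhds (hU hbox)), hrank _ hbox⟩ ?_
    exact ((contDiff_smoothStep.comp contDiff_fst).prodMk contDiff_snd).contMDiff.contMDiffAt
  refine ⟨⟨extendOffCube x₀ K', thinAt_extendOffCube hε hK'based hK'thin, ε, hε,
    fun s t => extendOffCube_of_mem_cubeCollar hK'based (p := (s, t)),
    fun s hs t ht => ?_, fun s hs t ht => ?_⟩⟩
  · rw [extendOffCube_of_mem (p := (s, t)) ht]
    simp only [K', smoothStep_of_le hs]
    exact hstart 0 ⟨le_rfl, zero_le_one⟩ t ht hε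
  · rw [extendOffCube_of_mem (p := (s, t)) ht]
    simp only [K', smoothStep_of_ge hs]
    exact hfinish 1 ⟨zero_le_one, le_rfl⟩ t ht (by linarith)

theorem symm (h : ThinHomotopic ℓ₁ ℓ₂) : ThinHomotopic ℓ₂ ℓ₁ :=
  h.nonempty_globalThinHomotopy.some.symm.thinHomotopic

theorem trans (h₁₂ : ThinHomotopic ℓ₁ ℓ₂) (h₂₃ : ThinHomotopic ℓ₂ ℓ₃) : ThinHomotopic ℓ₁ ℓ₃ :=
  (h₁₂.nonempty_globalThinHomotopy.some.trans h₂₃.nonempty_globalThinHomotopy.some).thinHomotopic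

end ThinHomotopic

theorem thinHomotopic_equivalence_general {E HM : Type*} [NormedAddCommGroup E] [NormedSpace ℝ E]
    [TopologicalSpace HM] (IM : ModelWithCorners ℝ E HM)
    (X : Type*) [TopologicalSpace X] [ChartedSpace HM X]
    (n : ℕ) (x₀ : X) :
    (∀ a : SmoothNLoop IM X n x₀, ThinHomotopic a a) ∧
    (∀ a b : SmoothNLoop IM X n x₀, ThinHomotopic a b → ThinHomotopic b a) ∧
    (∀ a b c : SmoothNLoop IM X n x₀,
        ThinHomotopic a b → ThinHomotopic b c → ThinHomotopic a c) :=
  ⟨ThinHomotopic.refl, fun _ _ => ThinHomotopic.symm, fun _ _ _ => ThinHomotopic.trans⟩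

/-- Rank-`n` homotopy is reflexive, symmetric and transitive on the set of
smooth `n`-loops in `X` based at `x₀`. -/
theorem thinHomotopic_equivalence {E HM : Type*} [NormedAddCommGroup E] [NormedSpace ℝ E]
    [TopologicalSpace HM] (IM : ModelWithCorners ℝ E HM)
    (X : Type*) [TopologicalSpace X] [ChartedSpace HM X] [IsManifold IM (⊤ : ℕ∞) X]
    (n : ℕ) (hn : 1 ≤ n) (x₀ : X) :
    (∀ a : SmoothNLoop IM X n x₀, ThinHomotopic a a) ∧
    (∀ a b : SmoothNLoop IM X n x₀, ThinHomotopic a b → ThinHomotopic b a) ∧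
    (∀ a b c : SmoothNLoop IM X n x₀,
        ThinHomotopic a b → ThinHomotopic b c → ThinHomotopic a c) :=
  thinHomotopic_equivalence_general IM X n x₀

end
end

section
/- For every smooth path λ : [0,1] → X with sitting instants at its endpoints, the concatenation λ ⋆ λ̄ — where λ̄(t) = λ(1−t) and (λ ⋆ λ̄)(t) = λ(2t) for t ≤ 1/2, (λ ⋆ λ̄)(t) = λ̄(2t−1) for t ≥ 1/2 — is a smooth path, and it is rank-1 homotopic to the constant path at λ(0). -/
/-!
Both halves of `λ ⋆ λ̄` are `λ ∘ τ` for the tent `τ t = 1 - |2t - 1|`. Since `λ` is constant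
near `1`, the kink of `τ` at `t = 1/2` can be smoothed away without changing `λ ∘ τ`, so
`λ ⋆ λ̄ = λ ∘ τ_b` with `τ_b` smooth, `τ_b [0,1] ⊆ [0,1]` and `τ_b 0 = τ_b 1 = 0`. Shrinking
`τ_b` to `0` by a smooth cutoff `ρ`, the homotopy `(s, t) ↦ λ (ρ s * τ_b t)` factors through `ℝ`,
so its differential has rank at most `1`.
-/

open scoped Manifold

noncomputable section

/-- A map `λ : ℝ → X` is a smooth path on `[0,1]` if it is `C^∞` on an open neighbourhood
of `[0,1]`. -/
def SmoothOnUnitInterval {E HM : Type*} [NormedAddCommGroup E] [NormedSpace ℝ E]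
    [TopologicalSpace HM] (IM : ModelWithCorners ℝ E HM)
    {X : Type*} [TopologicalSpace X] [ChartedSpace HM X] (lam : ℝ → X) : Prop :=
  ∃ U : Set ℝ, IsOpen U ∧ Set.Icc (0 : ℝ) 1 ⊆ U ∧ ContMDiffOn 𝓘(ℝ, ℝ) IM (⊤ : ℕ∞) lam U

/-- Rank-1 (thin) homotopy, with fixed endpoints, between two smooth paths `λ₁, λ₂` with
the same endpoints: a homotopy `K : [0,1] × [0,1] → X`, smooth on an open neighbourhood of
its domain, fixing the endpoints, equal to `λ₁` for `s ∈ [0,ε)` and to `λ₂` for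
`s ∈ (1-ε,1]`, and whose total differential has rank `≤ 1` at every point of its domain. -/
def Rank1Homotopic {E HM : Type*} [NormedAddCommGroup E] [NormedSpace ℝ E]
    [TopologicalSpace HM] (IM : ModelWithCorners ℝ E HM)
    {X : Type*} [TopologicalSpace X] [ChartedSpace HM X] (lam₁ lam₂ : ℝ → X) : Prop :=
  ∃ (K : ℝ × ℝ → X) (ε : ℝ), 0 < ε ∧
    (∃ U : Set (ℝ × ℝ), IsOpen U ∧ Set.Icc (0 : ℝ) 1 ×ˢ Set.Icc (0 : ℝ) 1 ⊆ U ∧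
        ContMDiffOn 𝓘(ℝ, ℝ × ℝ) IM (⊤ : ℕ∞) K U) ∧
    (∀ s ∈ Set.Icc (0 : ℝ) 1, K (s, 0) = lam₁ 0 ∧ K (s, 1) = lam₁ 1) ∧
    (∀ s ∈ Set.Icc (0 : ℝ) 1, ∀ t ∈ Set.Icc (0 : ℝ) 1, s < ε → K (s, t) = lam₁ t) ∧
    (∀ s ∈ Set.Icc (0 : ℝ) 1, ∀ t ∈ Set.Icc (0 : ℝ) 1, 1 - ε < s → K (s, t) = lam₂ t) ∧
    (∀ p ∈ Set.Icc (0 : ℝ) 1 ×ˢ Set.Icc (0 : ℝ) 1,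
        LinearMap.rank (mfderiv 𝓘(ℝ, ℝ × ℝ) IM K p).toLinearMap ≤ 1)

open Set

section SmoothAbs

/-- The sign function `u ↦ u / |u|` smoothed on `(-b, b)`. -/
def smoothSign (b u : ℝ) : ℝ :=
  Real.smoothTransition (u / b) - Real.smoothTransition (-u / b)

def smoothAbs (b u : ℝ) : ℝ := u * smoothSign b u

variable {b u : ℝ}

theorem contDiff_smoothAbs {n : ℕ∞} (b : ℝ) : ContDiff ℝ n (smoothAbs b) :=
  contDiff_id.mul <| (Real.smoothTransition.contDiff.comp (contDiff_id.div_const b)).sub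
    (Real.smoothTransition.contDiff.comp (contDiff_id.neg.div_const b))

theorem smoothSign_of_le (hb : 0 < b) (h : b ≤ u) : smoothSign b u = 1 := by
  rw [smoothSign, Real.smoothTransition.one_of_one_le ((le_div_iff₀ hb).mpr (by linarith)),
    Real.smoothTransition.zero_of_nonpos (div_nonpos_of_nonpos_of_nonneg (by linarith) hb.le),
    sub_zero]

theorem smoothSign_of_le_neg (hb : 0 < b) (h : u ≤ -b) : smoothSign b u = -1 := by
  rw [smoothSign, Real.smoothTransition.zero_of_nonpos
      (div_nonpos_of_nonpos_of_nonneg (by linarith) hb.le),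
    Real.smoothTransition.one_of_one_le ((le_div_iff₀ hb).mpr (by linarith)), zero_sub]

theorem smoothAbs_eq_abs (hb : 0 < b) (h : b ≤ |u|) : smoothAbs b u = |u| := by
  rcases le_abs'.mp h with hu | hu
  · rw [smoothAbs, smoothSign_of_le_neg hb hu, abs_of_neg (by linarith)]
    ring
  · rw [smoothAbs, smoothSign_of_le hb hu, abs_of_pos (by linarith), mul_one]

theorem smoothAbs_nonneg (hb : 0 ≤ b) (u : ℝ) : 0 ≤ smoothAbs b u := by
  rcases le_total 0 u with hu | hu
  · refine mul_nonneg hu ?_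
    rw [smoothSign, Real.smoothTransition.zero_of_nonpos
      (div_nonpos_of_nonpos_of_nonneg (neg_nonpos.mpr hu) hb), sub_zero]
    exact Real.smoothTransition.nonneg _
  · refine mul_nonneg_of_nonpos_of_nonpos hu ?_
    rw [smoothSign, Real.smoothTransition.zero_of_nonpos
      (div_nonpos_of_nonpos_of_nonneg hu hb), zero_sub, neg_nonpos]
    exact Real.smoothTransition.nonneg _

theorem abs_smoothSign_le_one (b u : ℝ) : |smoothSign b u| ≤ 1 := by
  have := Real.smoothTransition.nonneg (u / b)
  have := Real.smoothTransition.le_one (u / b)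
  have := Real.smoothTransition.nonneg (-u / b)
  have := Real.smoothTransition.le_one (-u / b)
  rw [smoothSign, abs_le]
  constructor <;> linarith

theorem smoothAbs_le_abs (b u : ℝ) : smoothAbs b u ≤ |u| :=
  calc smoothAbs b u ≤ |u * smoothSign b u| := le_abs_self _
    _ = |u| * |smoothSign b u| := abs_mul _ _
    _ ≤ |u| := mul_le_of_le_one_right (abs_nonneg u) (abs_smoothSign_le_one b u)

theorem comp_one_sub_smoothAbs {α : Type*} {f : ℝ → α} (hb : 0 < b)
    (hf : ∀ t ∈ Icc (1 - b) 1, f t = f 1) (u : ℝ) :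
    f (1 - smoothAbs b u) = f (1 - |u|) := by
  by_cases h : b ≤ |u|
  · rw [smoothAbs_eq_abs hb h]
  · have := smoothAbs_nonneg hb.le u
    have := smoothAbs_le_abs b u
    rw [hf (1 - smoothAbs b u) ⟨by linarith, by linarith⟩,
      hf (1 - |u|) ⟨by linarith, by linarith [abs_nonneg u]⟩]

end SmoothAbs

section SmoothTent

def smoothTent (b t : ℝ) : ℝ := 1 - smoothAbs b (2 * t - 1)

variable {b : ℝ}

theorem contDiff_smoothTent {n : ℕ∞} (b : ℝ) : ContDiff ℝ n (smoothTent b) :=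
  contDiff_const.sub <| (contDiff_smoothAbs b).comp <|
    (contDiff_const.mul contDiff_id).sub contDiff_const

theorem mapsTo_smoothTent (hb : 0 ≤ b) : MapsTo (smoothTent b) (Icc 0 1) (Icc 0 1) := by
  intro t ht
  have := smoothAbs_nonneg hb (2 * t - 1)
  have := smoothAbs_le_abs b (2 * t - 1)
  have : |2 * t - 1| ≤ 1 := abs_le.mpr ⟨by linarith [ht.1], by linarith [ht.2]⟩
  exact ⟨by rw [smoothTent]; linarith, by rw [smoothTent]; linarith⟩

theorem smoothTent_zero (hb : 0 < b) (hb1 : b ≤ 1) : smoothTent b 0 = 0 := by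
  rw [smoothTent, smoothAbs_eq_abs hb (by norm_num [hb1])]
  norm_num

theorem smoothTent_one (hb : 0 < b) (hb1 : b ≤ 1) : smoothTent b 1 = 0 := by
  rw [smoothTent, smoothAbs_eq_abs hb (by norm_num [hb1])]
  norm_num

end SmoothTent

section SmoothPaths

variable {E HM : Type*} [NormedAddCommGroup E] [NormedSpace ℝ E] [TopologicalSpace HM]
  {IM : ModelWithCorners ℝ E HM} {X : Type*} [TopologicalSpace X] [ChartedSpace HM X]
  {lam : ℝ → X}

theorem SmoothOnUnitInterval.exists_contMDiffOn_comp (hlam : SmoothOnUnitInterval IM lam)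
    {F : Type*} [NormedAddCommGroup F] [NormedSpace ℝ F] {f : F → ℝ}
    (hf : ContDiff ℝ ((⊤ : ℕ∞) : WithTop ℕ∞) f) {s : Set F} (hs : MapsTo f s (Icc 0 1)) :
    ∃ V : Set F, IsOpen V ∧ s ⊆ V ∧ ContMDiffOn 𝓘(ℝ, F) IM (⊤ : ℕ∞) (lam ∘ f) V := by
  obtain ⟨U, hUo, hUsub, hU⟩ := hlam
  exact ⟨f ⁻¹' U, hUo.preimage hf.continuous, fun x hx => hUsub (hs hx),
    hU.comp hf.contMDiff.contMDiffOn fun _ hx => hx⟩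

theorem SmoothOnUnitInterval.comp (hlam : SmoothOnUnitInterval IM lam) {f : ℝ → ℝ}
    (hf : ContDiff ℝ ((⊤ : ℕ∞) : WithTop ℕ∞) f) (hs : MapsTo f (Icc 0 1) (Icc 0 1)) :
    SmoothOnUnitInterval IM (lam ∘ f) :=
  hlam.exists_contMDiffOn_comp hf hs

theorem rank_mfderiv_comp_le_one {F : Type*} [NormedAddCommGroup F] [NormedSpace ℝ F]
    {f : F → ℝ} {x : F} (hlam : MDifferentiableAt 𝓘(ℝ, ℝ) IM lam (f x))
    (hf : DifferentiableAt ℝ f x) :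
    LinearMap.rank (mfderiv 𝓘(ℝ, F) IM (lam ∘ f) x).toLinearMap ≤ 1 := by
  rw [mfderiv_comp x hlam hf.mdifferentiableAt, ContinuousLinearMap.toLinearMap_comp]
  have hcomp := LinearMap.lift_rank_comp_le_right
    (mfderiv 𝓘(ℝ, F) 𝓘(ℝ, ℝ) f x).toLinearMap (mfderiv 𝓘(ℝ, ℝ) IM lam (f x)).toLinearMap
  rw [Cardinal.lift_uzero] at hcomp
  exact hcomp.trans <| Cardinal.lift_le_one_iff.mpr <|
    (LinearMap.rank_le_range _).trans_eq (Module.rank_self ℝ)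

theorem SmoothOnUnitInterval.rank1Homotopic_comp (hlam : SmoothOnUnitInterval IM lam)
    {τ : ℝ → ℝ} (hτ : ContDiff ℝ ((⊤ : ℕ∞) : WithTop ℕ∞) τ)
    (hτmaps : MapsTo τ (Icc 0 1) (Icc 0 1))
    (hτ0 : τ 0 = 0) (hτ1 : τ 1 = 0) :
    Rank1Homotopic IM (lam ∘ τ) (fun _ => lam 0) := by
  set ρ : ℝ → ℝ := fun s => Real.smoothTransition (2 - 4 * s)
  set ψ : ℝ × ℝ → ℝ := fun p => ρ p.1 * τ p.2
  have hψ : ContDiff ℝ ((⊤ : ℕ∞) : WithTop ℕ∞) ψ :=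
    (Real.smoothTransition.contDiff.comp
      (contDiff_const.sub (contDiff_const.mul contDiff_fst))).mul (hτ.comp contDiff_snd)
  have hψmaps : MapsTo ψ (Icc 0 1 ×ˢ Icc 0 1) (Icc 0 1) := fun p hp =>
    unitInterval.mul_mem ⟨Real.smoothTransition.nonneg _, Real.smoothTransition.le_one _⟩
      (hτmaps hp.2)
  obtain ⟨V, hVo, hVsub, hV⟩ := hlam.exists_contMDiffOn_comp hψ hψmaps
  refine ⟨lam ∘ ψ, 1 / 4, by norm_num, ⟨V, hVo, hVsub, hV⟩, ?_, ?_, ?_, ?_⟩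
  · intro s _
    simp only [Function.comp_apply, ψ, hτ0, hτ1, mul_zero, and_self]
  · intro s _ t _ hs
    have : ρ s = 1 := Real.smoothTransition.one_of_one_le (by linarith)
    simp only [Function.comp_apply, ψ, this, one_mul]
  · intro s _ t _ hs
    have : ρ s = 0 := Real.smoothTransition.zero_of_nonpos (by linarith)
    simp only [Function.comp_apply, ψ, this, zero_mul]
  · intro p hp
    obtain ⟨U, hUo, hUsub, hU⟩ := hlam
    have hlamψ : MDifferentiableAt 𝓘(ℝ, ℝ) IM lam (ψ p) :=
      (hU.contMDiffAt (hUo.mem_nhds (hUsub (hψmaps hp)))).mdifferentiableAt (by simp)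
    exact rank_mfderiv_comp_le_one hlamψ (hψ.differentiable (by simp) p)

end SmoothPaths

theorem concat_reverse_nullhomotopic_general {E HM : Type*} [NormedAddCommGroup E]
    [NormedSpace ℝ E] [TopologicalSpace HM] (IM : ModelWithCorners ℝ E HM)
    (X : Type*) [TopologicalSpace X] [ChartedSpace HM X]
    (lam : ℝ → X) (hlam : SmoothOnUnitInterval IM lam)
    (δ : ℝ) (hδ : 0 < δ)
    (hsit1 : ∀ t ∈ Set.Icc (1 - δ : ℝ) 1, lam t = lam 1) :
    SmoothOnUnitInterval IM
      (fun t : ℝ => if t ≤ 1 / 2 then lam (2 * t) else lam (2 - 2 * t)) ∧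
    Rank1Homotopic IM
      (fun t : ℝ => if t ≤ 1 / 2 then lam (2 * t) else lam (2 - 2 * t))
      (fun _ : ℝ => lam 0) := by
  set b := min δ 1
  have hb : 0 < b := lt_min hδ one_pos
  have hconcat : lam ∘ smoothTent b =
      fun t : ℝ => if t ≤ 1 / 2 then lam (2 * t) else lam (2 - 2 * t) := by
    have hconst : ∀ t ∈ Icc (1 - b) 1, lam t = lam 1 := fun t ht =>
      hsit1 t ⟨le_trans (by linarith [min_le_left δ 1]) ht.1, ht.2⟩
    funext t
    rw [Function.comp_apply, smoothTent, comp_one_sub_smoothAbs hb hconst]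
    split_ifs with ht
    · rw [abs_of_nonpos (by linarith)]; ring_nf
    · rw [abs_of_pos (by linarith)]; ring_nf
  rw [← hconcat]
  exact ⟨hlam.comp (contDiff_smoothTent b) (mapsTo_smoothTent hb.le),
    hlam.rank1Homotopic_comp (contDiff_smoothTent b) (mapsTo_smoothTent hb.le)
      (smoothTent_zero hb (min_le_right _ _)) (smoothTent_one hb (min_le_right _ _))⟩

/-- If `λ` is a smooth path with sitting instants at its endpoints, then
the concatenation `λ ⋆ λ̄` — given by `t ↦ λ(2t)` for `t ≤ 1/2` and `t ↦ λ̄(2t-1) = λ(2-2t)`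
for `t ≥ 1/2` — is a smooth path, and it is rank-1 homotopic to the constant path at
`λ(0)`. -/
theorem concat_reverse_nullhomotopic {E HM : Type*} [NormedAddCommGroup E]
    [NormedSpace ℝ E] [TopologicalSpace HM] (IM : ModelWithCorners ℝ E HM)
    (X : Type*) [TopologicalSpace X] [ChartedSpace HM X] [IsManifold IM (⊤ : ℕ∞) X]
    (lam : ℝ → X) (hlam : SmoothOnUnitInterval IM lam)
    (δ : ℝ) (hδ : 0 < δ)
    (hsit0 : ∀ t ∈ Set.Icc (0 : ℝ) δ, lam t = lam 0)
    (hsit1 : ∀ t ∈ Set.Icc (1 - δ : ℝ) 1, lam t = lam 1) :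
    SmoothOnUnitInterval IM
      (fun t : ℝ => if t ≤ 1 / 2 then lam (2 * t) else lam (2 - 2 * t)) ∧
    Rank1Homotopic IM
      (fun t : ℝ => if t ≤ 1 / 2 then lam (2 * t) else lam (2 - 2 * t))
      (fun _ : ℝ => lam 0) :=
  concat_reverse_nullhomotopic_general IM X lam hlam δ hδ hsit1

end
end
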